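/- arXiv:2311.10001 — 2 statements merged into one kernel-verified Lean document; each statement's English description precedes it below -/
import Mathlib

section
/- (Lemma 1, bound on the possible further improvement.) For every λ > 0, B(λ; c_*, v̄, K, K_1) − (λ²/n) Σ_{i=1}^n σ_i² f_2(λ c_i) ≤ λ⁵ c_*³ (K − K_1) f_5(λ c_*); that is, the bound B of Lemma 1 exceeds the idealised Bennett-type bound (λ²/n) Σ_{i=1}^n σ_i² f_2(λ c_i) by at most λ⁵ c_*³ (K − K_1) f_5(λ c_*). -/
open MeasureTheory ProbabilityTheory Real Finset

/-!
Every quantity is a weighted average over `i` of an expression in `u = λ c✶` and `t = c i / c✶`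
(so that `λ c i = u t`). Expanding `f₂` and `f₄` to the remainder `f₅`, the gap between the
`i`-th term of the claimed bound and that of `B − (λ²/n) ∑ σ i² f₂(λ c i)` is exactly
`(u t)³ f₅(u t)`, which is nonnegative because `f₅` has nonnegative coefficients.
-/

/-- `f k u = ∑_{j=0}^∞ u^j / (j+k)!`. -/
noncomputable def fSeries (k : ℕ) (u : ℝ) : ℝ := ∑' j : ℕ, u ^ j / (Nat.factorial (j + k) : ℝ)

lemma summable_fSeries (k : ℕ) (x : ℝ) :
    Summable (fun j : ℕ => x ^ j / (Nat.factorial (j + k) : ℝ)) := by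
  refine Summable.of_norm_bounded (Real.summable_pow_div_factorial |x|) fun j => ?_
  rw [Real.norm_eq_abs, abs_div, abs_pow, Nat.abs_cast]
  gcongr
  omega

lemma fSeries_eq_add_mul_fSeries_succ (k : ℕ) (x : ℝ) :
    fSeries k x = 1 / (Nat.factorial k : ℝ) + x * fSeries (k + 1) x := by
  rw [fSeries, (summable_fSeries k x).tsum_eq_zero_add, fSeries, ← tsum_mul_left]
  congr 1
  · simp
  · refine tsum_congr fun j => ?_
    rw [pow_succ', mul_div_assoc, Nat.add_right_comm, Nat.add_assoc]

lemma fSeries_nonneg (k : ℕ) {x : ℝ} (hx : 0 ≤ x) : 0 ≤ fSeries k x :=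
  tsum_nonneg fun _ => div_nonneg (pow_nonneg hx _) (Nat.cast_nonneg _)

lemma fSeries_four_eq (x : ℝ) : fSeries 4 x = 1 / 24 + x * fSeries 5 x := by
  rw [fSeries_eq_add_mul_fSeries_succ 4]
  norm_num [Nat.factorial]

lemma fSeries_two_eq (x : ℝ) :
    fSeries 2 x = 1 / 2 + x / 6 + x ^ 2 / 24 + x ^ 3 * fSeries 5 x := by
  rw [fSeries_eq_add_mul_fSeries_succ 2, fSeries_eq_add_mul_fSeries_succ 3, fSeries_four_eq]
  norm_num [Nat.factorial]
  ring

lemma improvement_gap_eq (u t : ℝ) :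
    u ^ 3 * t ^ 2 * fSeries 5 u -
        (1 / 2 + t * (fSeries 2 u - 1 / 2) - u ^ 2 * t * (1 - t) * fSeries 4 u -
          fSeries 2 (u * t)) =
      (u * t) ^ 3 * fSeries 5 (u * t) := by
  rw [fSeries_two_eq u, fSeries_two_eq (u * t), fSeries_four_eq]
  ring

lemma improvement_term_le {u t : ℝ} (hut : 0 ≤ u * t) :
    1 / 2 + t * (fSeries 2 u - 1 / 2) - u ^ 2 * t * (1 - t) * fSeries 4 u - fSeries 2 (u * t) ≤
      u ^ 3 * t ^ 2 * fSeries 5 u := by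
  have hgap := improvement_gap_eq u t
  have := mul_nonneg (pow_nonneg hut 3) (fSeries_nonneg 5 hut)
  linarith

theorem lemma_one_improvement_bound_general
    (n : ℕ) (σ c : Fin n → ℝ) (cstar : ℝ)
    (hcnonneg : ∀ i, 0 ≤ c i)
    (hcpos : 0 < cstar)
    (v K K1 : ℝ)
    (hv : v = (1 / (n : ℝ)) * ∑ i, σ i ^ 2)
    (hK : K = (1 / (n : ℝ)) * ∑ i, σ i ^ 2 * (c i / cstar))
    (hK1 : K1 = (1 / (n : ℝ)) * ∑ i, σ i ^ 2 * (c i / cstar) * (1 - c i / cstar))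
    (l : ℝ) (hl : 0 < l) :
    ((1 / 2) * l ^ 2 * v + l ^ 2 * K * (fSeries 2 (l * cstar) - 1 / 2) -
        l ^ 4 * cstar ^ 2 * K1 * fSeries 4 (l * cstar)) -
      (l ^ 2 / (n : ℝ)) * ∑ i, σ i ^ 2 * fSeries 2 (l * c i) ≤
      l ^ 5 * cstar ^ 3 * (K - K1) * fSeries 5 (l * cstar) := by
  subst hv hK hK1
  set u := l * cstar
  have hlc : ∀ i, l * c i = u * (c i / cstar) := fun i => by simp only [u]; field_simp
  simp_rw [hlc]
  calc _ = l ^ 2 / n * ∑ i, σ i ^ 2 * (1 / 2 + c i / cstar * (fSeries 2 u - 1 / 2) -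
              u ^ 2 * (c i / cstar) * (1 - c i / cstar) * fSeries 4 u -
              fSeries 2 (u * (c i / cstar))) := by
        simp only [mul_sum, sum_mul, ← sum_sub_distrib, ← sum_add_distrib]
        exact sum_congr rfl fun i _ => by ring
    _ ≤ l ^ 2 / n * ∑ i, σ i ^ 2 * (u ^ 3 * (c i / cstar) ^ 2 * fSeries 5 u) := by
        gcongr with i
        exact improvement_term_le (mul_nonneg (by positivity) (div_nonneg (hcnonneg i) hcpos.le))
    _ = _ := by
        simp only [mul_sum, sum_mul, ← sum_sub_distrib]
        exact sum_congr rfl fun i _ => by ring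

/-- **Lemma 1, bound on the possible further improvement.** With the setup of Lemma 1,
for every `λ > 0`, the bound `B(λ; c✶, v̄, K, K₁)` exceeds the idealised Bennett-type bound
`(λ²/n) ∑ i, σ i ² f₂(λ c i)` by at most `λ⁵ c✶³ (K − K₁) f₅(λ c✶)`. -/
theorem lemma_one_improvement_bound
    {Ω : Type*} [MeasurableSpace Ω] (μ : Measure Ω) [IsProbabilityMeasure μ]
    (n : ℕ) (hn : 0 < n) (X : Fin n → Ω → ℝ) (σ c : Fin n → ℝ) (cstar : ℝ)
    (hmeas : ∀ i, Measurable (X i))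
    (hindep : iIndepFun X μ)
    (hmean : ∀ i, ∫ ω, X i ω ∂μ = 0)
    (hL2 : ∀ i, MemLp (X i) 2 μ)
    (hvar : ∀ i, variance (X i) μ = σ i ^ 2)
    (hcnonneg : ∀ i, 0 ≤ c i)
    (hbdd : ∀ i, ∀ᵐ ω ∂μ, X i ω ≤ c i)
    (hcmax : ∀ i, c i ≤ cstar) (hcattained : ∃ i, c i = cstar) (hcpos : 0 < cstar)
    (v K K1 : ℝ)
    (hv : v = (1 / (n : ℝ)) * ∑ i, σ i ^ 2)
    (hK : K = (1 / (n : ℝ)) * ∑ i, σ i ^ 2 * (c i / cstar))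
    (hK1 : K1 = (1 / (n : ℝ)) * ∑ i, σ i ^ 2 * (c i / cstar) * (1 - c i / cstar))
    (l : ℝ) (hl : 0 < l) :
    ((1 / 2) * l ^ 2 * v + l ^ 2 * K * (fSeries 2 (l * cstar) - 1 / 2) -
        l ^ 4 * cstar ^ 2 * K1 * fSeries 4 (l * cstar)) -
      (l ^ 2 / (n : ℝ)) * ∑ i, σ i ^ 2 * fSeries 2 (l * c i) ≤
      l ^ 5 * cstar ^ 3 * (K - K1) * fSeries 5 (l * cstar) :=
  lemma_one_improvement_bound_general n σ c cstar hcnonneg hcpos v K K1 hv hK hK1 l hl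
end

section
/- (Differentiation identity for the functions f_j.) For every integer j ≥ 1 and every real constant c, the map λ ↦ λ^j f_j(λ c) is differentiable on ℝ and (d/dλ) { λ^j f_j(λ c) } = λ^{j−1} f_{j−1}(λ c). -/
/-!
Multiplying by `u ^ k` turns `f_k u` into the Taylor remainder `exp u - ∑_{m<k} u^m/m!`, and
differentiating this remainder of order `k + 1` gives the remainder of order `k`. This is the
case `c = 1`; a general `c ≠ 0` follows by rescaling, and for `c = 0` both sides are monomials.
-/

open Real

open Finset Nat

lemma summable_pow_div_factorial_add (k : ℕ) (u : ℝ) :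
    Summable (fun n : ℕ => u ^ n / ((n + k)! : ℝ)) := by
  refine Summable.of_norm_bounded (Real.summable_pow_div_factorial |u|) fun n => ?_
  rw [norm_div, norm_pow, Real.norm_eq_abs, Real.norm_natCast]
  gcongr
  exact Nat.le_add_right n k

lemma pow_mul_fSeries (k : ℕ) (u : ℝ) :
    u ^ k * fSeries k u = exp u - ∑ m ∈ range k, u ^ m / (m ! : ℝ) := by
  have hexp : exp u = ∑' n : ℕ, u ^ n / (n ! : ℝ) := by
    rw [Real.exp_eq_exp_ℝ, NormedSpace.exp_eq_tsum_div]
  have htail := (summable_pow_div_factorial_add 0 u).sum_add_tsum_nat_add k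
  have hshift : u ^ k * fSeries k u = ∑' n : ℕ, u ^ (n + k) / ((n + k)! : ℝ) := by
    rw [fSeries, ← tsum_mul_left]
    congr 1 with n
    rw [pow_add, mul_comm (u ^ n), mul_div_assoc]
  simp only [add_zero] at htail
  rw [hshift, hexp, ← htail]
  ring

lemma fSeries_zero_right (k : ℕ) : fSeries k 0 = 1 / (k ! : ℝ) := by
  rw [fSeries, tsum_eq_single 0 fun n hn => by simp [zero_pow hn]]
  simp

lemma hasDerivAt_pow_succ_div_factorial (k : ℕ) (x : ℝ) :
    HasDerivAt (fun x : ℝ => x ^ (k + 1) / ((k + 1)! : ℝ)) (x ^ k / (k ! : ℝ)) x := by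
  refine ((hasDerivAt_pow (k + 1) x).div_const ((k + 1)! : ℝ)).congr_deriv ?_
  rw [Nat.factorial_succ]
  push_cast
  field_simp

lemma hasDerivAt_sum_range_pow_div_factorial (k : ℕ) (x : ℝ) :
    HasDerivAt (fun x : ℝ => ∑ m ∈ range (k + 1), x ^ m / (m ! : ℝ))
      (∑ m ∈ range k, x ^ m / (m ! : ℝ)) x := by
  induction k with
  | zero => simpa using hasDerivAt_const x (1 : ℝ)
  | succ k ih =>
    simpa only [← sum_range_succ] using ih.fun_add (hasDerivAt_pow_succ_div_factorial k x)

lemma hasDerivAt_pow_succ_mul_fSeries (k : ℕ) (u : ℝ) :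
    HasDerivAt (fun u : ℝ => u ^ (k + 1) * fSeries (k + 1) u) (u ^ k * fSeries k u) u := by
  simp only [pow_mul_fSeries]
  exact (hasDerivAt_exp u).sub (hasDerivAt_sum_range_pow_div_factorial k u)

/-- **Differentiation identity for the functions `f_j`.** For every integer `j ≥ 1` and every
real constant `c`, the map `λ ↦ λ^j f_j(λ c)` is differentiable on `ℝ` with
`(d/dλ) {λ^j f_j(λ c)} = λ^{j−1} f_{j−1}(λ c)`. -/
theorem hasDerivAt_pow_mul_fSeries
    (j : ℕ) (hj : 1 ≤ j) (c : ℝ) (l : ℝ) :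
    HasDerivAt (fun x : ℝ => x ^ j * fSeries j (x * c))
      (l ^ (j - 1) * fSeries (j - 1) (l * c)) l := by
  obtain ⟨k, rfl⟩ := Nat.exists_eq_add_of_le' hj
  rw [Nat.add_sub_cancel]
  rcases eq_or_ne c 0 with rfl | hc
  · simp only [mul_zero, fSeries_zero_right, mul_one_div]
    exact hasDerivAt_pow_succ_div_factorial k l
  have hscale : (fun x : ℝ => x ^ (k + 1) * fSeries (k + 1) (x * c)) =
      fun x => (c ^ (k + 1))⁻¹ * ((x * c) ^ (k + 1) * fSeries (k + 1) (x * c)) := by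
    funext x
    rw [mul_pow]
    field_simp
  rw [hscale]
  refine (((hasDerivAt_pow_succ_mul_fSeries k (l * c)).comp l
    ((hasDerivAt_id l).mul_const c)).const_mul (c ^ (k + 1))⁻¹).congr_deriv ?_
  rw [mul_pow, pow_succ]
  field_simp
end
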